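/- arXiv:1210.0675 — 3 statements merged into one kernel-verified Lean document; each statement's English description precedes it below -/
import Mathlib

section
/- Suppose ψ and ψ⁰ are cocycles over (Ω, θ) and ζ : Ω × ℝ^d → ℝ^d is such that each ζ(ω,·) is a bijection. Suppose that there is a function τ : Ω × ℝ^d → (0,∞] such that for every ω and y, ψ_t(ω,y) = ζ(θ_t ω, ψ⁰_t(ω, ζ(ω,·)^{-1}(y))) holds for all 0 ≤ t ≤ τ(ω,y), and for every ω, y the sequence of successive times τ^1 ≤ τ^2 ≤ ⋯ defined by τ^{n+1}(ω,y) = τ^n(ω,y) + τ(θ_{τ^n}ω, ψ_{τ^n}(ω,y)) tends to infinity. Then the conjugacy identity ψ_t(ω,·) = ζ(θ_t ω,·) ∘ ψ⁰_t(ω,·) ∘ ζ(ω,·)^{-1} holds for all t ≥ 0. -/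
open Filter

/-- a local conjugacy of cocycles, valid up to a positive stopping time
τ(ω,y) whose successive iterates tend to infinity, extends to a global conjugacy
for all t ≥ 0. -/
theorem local_to_global_conjugacy {d : ℕ} {Ω : Type*}
    (θ : ℝ → Ω → Ω)
    (hθ0 : ∀ ω, θ 0 ω = ω)
    (hθ : ∀ s t : ℝ, ∀ ω : Ω, θ (t + s) ω = θ t (θ s ω))
    (ψ ψ0 : ℝ → Ω → (Fin d → ℝ) → (Fin d → ℝ))
    (hψ : ∀ s t : ℝ, 0 ≤ s → 0 ≤ t → ∀ ω, ψ (t + s) ω = ψ t (θ s ω) ∘ ψ s ω)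
    (hψ0 : ∀ s t : ℝ, 0 ≤ s → 0 ≤ t → ∀ ω, ψ0 (t + s) ω = ψ0 t (θ s ω) ∘ ψ0 s ω)
    (ζ : Ω → (Fin d → ℝ) ≃ (Fin d → ℝ))
    (τ : Ω → (Fin d → ℝ) → ℝ)
    (hτpos : ∀ ω y, 0 < τ ω y)
    -- local conjugacy: ψ_t(ω,y) = ζ(θ_t ω, ψ⁰_t(ω, ζ(ω,·)⁻¹ y)) for 0 ≤ t ≤ τ(ω,y)
    (hloc : ∀ ω y, ∀ t : ℝ, 0 ≤ t → t ≤ τ ω y →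
      ψ t ω y = ζ (θ t ω) (ψ0 t ω ((ζ ω).symm y)))
    -- the successive times τ¹ ≤ τ² ≤ ⋯ : T ω y 0 = 0 and
    -- T ω y (n+1) = T ω y n + τ(θ_{T ω y n} ω, ψ_{T ω y n}(ω,y)), tending to ∞
    (T : Ω → (Fin d → ℝ) → ℕ → ℝ)
    (hT0 : ∀ ω y, T ω y 0 = 0)
    (hTrec : ∀ ω y n,
      T ω y (n + 1) = T ω y n + τ (θ (T ω y n) ω) (ψ (T ω y n) ω y))
    (hTinf : ∀ ω y, Tendsto (fun n => T ω y n) atTop atTop) :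
    ∀ (t : ℝ), 0 ≤ t → ∀ ω, ψ t ω = (ζ (θ t ω)) ∘ (ψ0 t ω) ∘ (ζ ω).symm := by
  intro t ht ω
  funext y
  have hTnn : ∀ n, 0 ≤ T ω y n := by
    intro n
    induction n with
    | zero => simp [hT0]
    | succ n ih =>
      rw [hTrec]
      have := hτpos (θ (T ω y n) ω) (ψ (T ω y n) ω y)
      linarith
  have key : ∀ n, ∀ s : ℝ, 0 ≤ s → s ≤ T ω y n →
      ψ s ω y = ζ (θ s ω) (ψ0 s ω ((ζ ω).symm y)) := by
    intro n
    induction n with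
    | zero =>
      intro s hs hs'
      rw [hT0] at hs'
      have hs0 : s = 0 := le_antisymm hs' hs
      subst hs0
      exact hloc ω y 0 le_rfl (hτpos ω y).le
    | succ n ih =>
      intro s hs hs'
      by_cases hcase : s ≤ T ω y n
      · exact ih s hs hcase
      push_neg at hcase
      set Tn := T ω y n with hTn
      have hTnn' : 0 ≤ Tn := hTnn n
      have h1 : s - Tn ≤ τ (θ Tn ω) (ψ Tn ω y) := by
        rw [hTrec] at hs'
        linarith
      have h2 : 0 ≤ s - Tn := by linarith [hcase.le]
      have hsum : s - Tn + Tn = s := by ring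
      have hdecomp : ψ s ω y = ψ (s - Tn) (θ Tn ω) (ψ Tn ω y) := by
        have h := hψ Tn (s - Tn) hTnn' h2 ω
        rw [hsum] at h
        rw [h]
        rfl
      rw [hdecomp, hloc (θ Tn ω) (ψ Tn ω y) (s - Tn) h2 h1]
      have hyT : ψ Tn ω y = ζ (θ Tn ω) (ψ0 Tn ω ((ζ ω).symm y)) := ih Tn hTnn' le_rfl
      rw [hyT, Equiv.symm_apply_apply]
      have hθeq : θ (s - Tn) (θ Tn ω) = θ s ω := by
        rw [← hθ Tn (s - Tn) ω, hsum]
      have hψ0eq : ψ0 (s - Tn) (θ Tn ω) (ψ0 Tn ω ((ζ ω).symm y))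
          = ψ0 s ω ((ζ ω).symm y) := by
        have h := hψ0 Tn (s - Tn) hTnn' h2 ω
        rw [hsum] at h
        rw [h]
        rfl
      rw [hθeq, hψ0eq]
  obtain ⟨n, hn⟩ := ((hTinf ω y).eventually_ge_atTop t).exists
  exact key n t ht hn
end

section
/- With V and ā as in the Duffing–van der Pol example, and κ(y) = y_1^6 + y_2^2, there exist η > 0 and R > 0 such that for all y ∈ ℝ² with |y| ≥ R, one has ⟨∇V(y), ā(y)⟩ ≤ −η κ(y). Consequently there exists C > 0 with |⟨∇V(y), ā(y)⟩| ≤ C κ(y) for |y| ≥ R, and limsup_{|y|→∞} ⟨∇V(y), ā(y)⟩ / κ(y) ≤ −η. -/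
set_option maxHeartbeats 1000000


/-- with V, ā as in the Duffing–van der Pol example and
κ(y) = y₁⁶ + y₂², there exist η > 0 and R > 0 such that
⟨∇V(y), ā(y)⟩ ≤ −η κ(y) for |y| ≥ R; consequently
|⟨∇V(y), ā(y)⟩| ≤ C κ(y) for |y| ≥ R for some C > 0, and
limsup_{|y|→∞} ⟨∇V(y), ā(y)⟩/κ(y) ≤ −η. -/
theorem duffing_lyapunov_estimate (γ₁ γ₂ : ℝ) :
    ∃ η > (0:ℝ), ∃ R > (0:ℝ),
      (∀ y₁ y₂ : ℝ, R ≤ Real.sqrt (y₁^2 + y₂^2) →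
        (7/6 * y₁^3 + 3/2 * y₁ - y₂) * (γ₂ * y₁ - 1/3 * y₁^3 + y₂)
          + (3/2 * y₂ - y₁) * (γ₁ * y₁ - y₁^3)
        ≤ -η * (y₁^6 + y₂^2)) ∧
      (∃ C > (0:ℝ), ∀ y₁ y₂ : ℝ, R ≤ Real.sqrt (y₁^2 + y₂^2) →
        |(7/6 * y₁^3 + 3/2 * y₁ - y₂) * (γ₂ * y₁ - 1/3 * y₁^3 + y₂)
          + (3/2 * y₂ - y₁) * (γ₁ * y₁ - y₁^3)|
        ≤ C * (y₁^6 + y₂^2)) ∧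
      (∀ ε > (0:ℝ), ∃ R' > (0:ℝ), ∀ y₁ y₂ : ℝ, R' ≤ Real.sqrt (y₁^2 + y₂^2) →
        ((7/6 * y₁^3 + 3/2 * y₁ - y₂) * (γ₂ * y₁ - 1/3 * y₁^3 + y₂)
          + (3/2 * y₂ - y₁) * (γ₁ * y₁ - y₁^3)) / (y₁^6 + y₂^2)
        ≤ -η + ε) := by
  set a : ℝ := 7/6*γ₂ + 1/2 with ha
  set b : ℝ := 3/2 + 3/2*γ₁ - γ₂ with hb
  set c : ℝ := 3/2*γ₂ - γ₁ with hc
  have hA0 : (0:ℝ) ≤ |a| := abs_nonneg a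
  have hK0 : (0:ℝ) ≤ b^2/2 + |c| := by positivity
  set A : ℝ := |a| with hA
  set K : ℝ := b^2/2 + |c| with hK
  set S : ℝ := 8*(A+K)+1 with hS
  have hS1 : (1:ℝ) ≤ S := by rw [hS]; linarith
  set M : ℝ := A*S^2 + K*S with hM
  have hM0 : (0:ℝ) ≤ M := by
    rw [hM]
    have : (0:ℝ) ≤ S := by linarith
    positivity
  -- the expansion
  have hFeq : ∀ y₁ y₂ : ℝ,
      (7/6 * y₁^3 + 3/2 * y₁ - y₂) * (γ₂ * y₁ - 1/3 * y₁^3 + y₂)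
        + (3/2 * y₂ - y₁) * (γ₁ * y₁ - y₁^3)
      = -7/18*y₁^6 - y₂^2 + a*y₁^4 + b*(y₁*y₂) + c*y₁^2 := by
    intro y₁ y₂; rw [ha, hb, hc]; ring
  clear_value a b c A K S M
  -- main pointwise estimate
  have hmain : ∀ y₁ y₂ : ℝ, 2*S + 8*M ≤ y₁^2 + y₂^2 →
      (7/6 * y₁^3 + 3/2 * y₁ - y₂) * (γ₂ * y₁ - 1/3 * y₁^3 + y₂)
        + (3/2 * y₂ - y₁) * (γ₁ * y₁ - y₁^3)
      ≤ -(1/4) * (y₁^6 + y₂^2) := by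
    intro y₁ y₂ hy
    have h1 : a*y₁^4 ≤ A*y₁^4 := by
      rw [hA]; exact mul_le_mul_of_nonneg_right (le_abs_self a) (by positivity)
    have h2 : b*(y₁*y₂) ≤ b^2/2*y₁^2 + 1/2*y₂^2 := by nlinarith [sq_nonneg (b*y₁ - y₂)]
    have h3 : c*y₁^2 ≤ (|c|) * y₁^2 :=
      mul_le_mul_of_nonneg_right (le_abs_self c) (sq_nonneg y₁)
    have hst : -(5/36)*y₁^6 + A*y₁^4 + K*y₁^2 ≤ 1/4*y₂^2 := by
      rcases le_or_gt S (y₁^2) with hs | hs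
      · have hu1 : (1:ℝ) ≤ y₁^2 := le_trans hS1 hs
        have hu4 : (0:ℝ) ≤ y₁^4 := by positivity
        have h24 : y₁^2 ≤ y₁^4 := by
          have := mul_le_mul_of_nonneg_right hu1 (sq_nonneg y₁)
          nlinarith [this]
        have e1 : K*y₁^2 ≤ K*y₁^4 := mul_le_mul_of_nonneg_left h24 hK0
        have hAK : A + K ≤ (y₁^2-1)/8 := by rw [hS] at hs; linarith
        have e2 : (A+K)*y₁^4 ≤ ((y₁^2-1)/8)*y₁^4 := mul_le_mul_of_nonneg_right hAK hu4
        have h6 : (0:ℝ) ≤ y₁^6 := by positivity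
        have e3 : ((y₁^2-1)/8)*y₁^4 ≤ (5/36)*y₁^6 := by linarith
        nlinarith [sq_nonneg y₂]
      · have hs0 : (0:ℝ) ≤ y₁^2 := sq_nonneg y₁
        have h4S : y₁^4 ≤ S^2 := by
          have h := mul_le_mul hs.le hs.le hs0 (le_trans zero_le_one hS1)
          nlinarith [h]
        have e1a : A*y₁^4 ≤ A*S^2 := mul_le_mul_of_nonneg_left h4S hA0
        have e1b : K*y₁^2 ≤ K*S := mul_le_mul_of_nonneg_left hs.le hK0
        have e2 : 8*M ≤ y₂^2 := by linarith
        have h6 : (0:ℝ) ≤ y₁^6 := by positivity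
        linarith
    rw [hFeq]
    rw [hK] at hst
    linarith
  have hRpos : (0:ℝ) < 2*S + 8*M := by linarith
  refine ⟨1/4, by norm_num, Real.sqrt (2*S + 8*M), Real.sqrt_pos.mpr hRpos, ?_, ?_, ?_⟩
  · intro y₁ y₂ h
    have h' : 2*S + 8*M ≤ y₁^2 + y₂^2 := (Real.sqrt_le_sqrt_iff (by positivity)).mp h
    have := hmain y₁ y₂ h'
    linarith
  · -- the absolute value bound
    refine ⟨2*(A+K)+2, by positivity, ?_⟩
    intro y₁ y₂ h
    have h' : 2*S + 8*M ≤ y₁^2 + y₂^2 := (Real.sqrt_le_sqrt_iff (by positivity)).mp h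
    have hup := hmain y₁ y₂ h'
    have hκ0 : (0:ℝ) ≤ y₁^6 + y₂^2 := by positivity
    have hκ1 : (1:ℝ) ≤ y₁^6 + y₂^2 := by
      rcases le_or_gt 1 (y₁^2) with h1 | h1
      · have : (0:ℝ) ≤ (y₁^2 - 1) * ((y₁^2)^2 + y₁^2 + 1) := by
          apply mul_nonneg (by linarith); positivity
        nlinarith [sq_nonneg y₂]
      · nlinarith [sq_nonneg (y₁^3)]
    have h641 : y₁^4 ≤ y₁^6 + 1 := by
      nlinarith [mul_nonneg (sq_nonneg (y₁^2-1)) (sq_nonneg y₁), sq_nonneg (y₁^2 - 1/2)]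
    have h621 : y₁^2 ≤ y₁^6 + 1 := by
      nlinarith [mul_nonneg (sq_nonneg (y₁^2-1)) (sq_nonneg y₁), sq_nonneg (y₁^2 - 1/2)]
    have h4 : y₁^4 ≤ 2*(y₁^6 + y₂^2) := by linarith [sq_nonneg y₂]
    have h2' : y₁^2 ≤ 2*(y₁^6 + y₂^2) := by linarith [sq_nonneg y₂]
    rw [abs_le]
    constructor
    · rw [hFeq]
      have i1 : -(A*y₁^4) ≤ a*y₁^4 := by
        rw [hA]
        have := mul_le_mul_of_nonneg_right (neg_abs_le a) (by positivity : (0:ℝ) ≤ y₁^4)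
        linarith
      have i2 : -(b^2/2*y₁^2 + 1/2*y₂^2) ≤ b*(y₁*y₂) := by nlinarith [sq_nonneg (b*y₁ + y₂)]
      have i3 : -((|c|) * y₁^2) ≤ c*y₁^2 := by
        have := mul_le_mul_of_nonneg_right (neg_abs_le c) (sq_nonneg y₁)
        linarith
      have j1 : A*y₁^4 ≤ A*(2*(y₁^6 + y₂^2)) := mul_le_mul_of_nonneg_left h4 hA0
      have j2 : (b^2/2)*y₁^2 ≤ (b^2/2)*(2*(y₁^6 + y₂^2)) :=
        mul_le_mul_of_nonneg_left h2' (by positivity)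
      have j3 : (|c|) * y₁^2 ≤ (|c|) * (2*(y₁^6 + y₂^2)) :=
        mul_le_mul_of_nonneg_left h2' (abs_nonneg c)
      rw [hK]
      nlinarith [sq_nonneg y₁, sq_nonneg y₂, pow_nonneg (sq_nonneg y₁) 3]
    · have : (0:ℝ) ≤ (2*(A+K)+2) * (y₁^6 + y₂^2) := by positivity
      linarith
  · intro ε hε
    refine ⟨Real.sqrt (2*S + 8*M), Real.sqrt_pos.mpr hRpos, ?_⟩
    intro y₁ y₂ h
    have h' : 2*S + 8*M ≤ y₁^2 + y₂^2 := (Real.sqrt_le_sqrt_iff (by positivity)).mp h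
    have hup := hmain y₁ y₂ h'
    have hκ1 : (1:ℝ) ≤ y₁^6 + y₂^2 := by
      rcases le_or_gt 1 (y₁^2) with h1 | h1
      · have : (0:ℝ) ≤ (y₁^2 - 1) * ((y₁^2)^2 + y₁^2 + 1) := by
          apply mul_nonneg (by linarith); positivity
        nlinarith [sq_nonneg y₂]
      · nlinarith [sq_nonneg (y₁^3)]
    have hκpos : (0:ℝ) < y₁^6 + y₂^2 := by linarith
    rw [div_le_iff₀ hκpos]
    nlinarith [mul_nonneg hε.le hκpos.le]
end

section
/- Let L : ℝ → ℝ be a locally bounded measurable function of bounded variation on compacts with L(0) = 0 (a sample path of a Lévy process with finite variation), μ > 0, and suppose Z_t := e^{−μt} ∫_{−∞}^t e^{μs} dL(s) is well-defined (the improper Lebesgue–Stieltjes integral converges). Then Z satisfies the integral equation Z_t = Z_0 − μ ∫_0^t Z_s ds + L(t) for all t ≥ 0. -/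
/-!
Put `A_F(s) = ∫_{(-∞, s]} e^{μu} dF(u)`, so that `Z_t = e^{-μt} (A_F(t) - A_G(t))`. Exchanging the
order of integration (Fubini),
`μ ∫_0^t e^{-μs} A_F(s) ds = ∫_{(-∞, t]} e^{μu} (e^{-μ max(u, 0)} - e^{-μt}) dF(u)
  = A_F(0) + F(t) - F(0) - e^{-μt} A_F(t)`,
and subtracting the same identity for `G` gives the integral equation, as `F(0) = G(0)`.
-/

open MeasureTheory Set

theorem integral_mul_exp_neg_mul (μ a b : ℝ) :
    ∫ s in a..b, μ * Real.exp (-μ * s) = Real.exp (-μ * a) - Real.exp (-μ * b) := by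
  have hderiv : ∀ x, HasDerivAt (fun s => -Real.exp (-μ * s)) (μ * Real.exp (-μ * x)) x :=
    fun x => (((hasDerivAt_id' x).const_mul (-μ)).exp.neg).congr_deriv (by ring)
  rw [intervalIntegral.integral_eq_sub_of_hasDerivAt (fun x _ => hderiv x)
    (Continuous.intervalIntegrable (by fun_prop) _ _)]
  ring

theorem setIntegral_Ioc_mul_setIntegral_Iic_swap {ν : Measure ℝ} [SFinite ν] {k g : ℝ → ℝ}
    {a b : ℝ} (hk : IntegrableOn k (Ioc a b)) (hg : IntegrableOn g (Iic b) ν) :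
    ∫ s in Ioc a b, k s * ∫ u in Iic s, g u ∂ν
      = ∫ u in Iic b, g u * (∫ s in Ioc (max a u) b, k s) ∂ν := by
  set f : ℝ × ℝ → ℝ := {p | p.2 ≤ p.1}.indicator (fun p => k p.1 * g p.2)
  have hint : Integrable f ((volume.restrict (Ioc a b)).prod (ν.restrict (Iic b))) :=
    (hk.mul_prod hg).indicator (isClosed_le continuous_snd continuous_fst).measurableSet
  have hleft : ∀ s ∈ Ioc a b, k s * ∫ u in Iic s, g u ∂ν = ∫ u in Iic b, f (s, u) ∂ν := by
    intro s hs
    have hf : ∀ u, f (s, u) = (Iic s).indicator (fun u => k s * g u) u := fun _ => rfl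
    simp_rw [hf, setIntegral_indicator measurableSet_Iic, Iic_inter_Iic, min_eq_right hs.2,
      integral_const_mul]
  have hright : ∀ u ∈ Iic b, ∫ s in Ioc a b, f (s, u) = g u * ∫ s in Ioc (max a u) b, k s := by
    intro u _
    have hf : ∀ s, f (s, u) = (Ici u).indicator k s * g u := fun s =>
      indicator_mul_left (Ici u) k (fun _ => g u)
    simp_rw [hf, integral_mul_const, setIntegral_indicator measurableSet_Ici, ← Ioc_inter_Ioi]
    rw [mul_comm, setIntegral_congr_set (ae_eq_refl _ |>.inter Ioi_ae_eq_Ici.symm)]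
  rw [setIntegral_congr_fun measurableSet_Ioc hleft,
    integral_integral_swap (f := fun s u => f (s, u)) hint]
  exact setIntegral_congr_fun measurableSet_Iic hright

theorem monotone_setIntegral_Iic {ν : Measure ℝ} {g : ℝ → ℝ} (hg_nonneg : 0 ≤ g)
    (hg : ∀ t, IntegrableOn g (Iic t) ν) : Monotone fun s => ∫ u in Iic s, g u ∂ν :=
  fun _ t hst => setIntegral_mono_set (hg t) (.of_forall hg_nonneg)
    (Iic_subset_Iic.2 hst).eventuallyLE

theorem intervalIntegrable_exp_neg_mul_setIntegral_Iic {ν : Measure ℝ} {μ : ℝ}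
    (hν : ∀ t, IntegrableOn (fun u => Real.exp (μ * u)) (Iic t) ν) (a b : ℝ) :
    IntervalIntegrable (fun s => Real.exp (-μ * s) * ∫ u in Iic s, Real.exp (μ * u) ∂ν)
      volume a b :=
  ((monotone_setIntegral_Iic (fun _ => (Real.exp_pos _).le) hν).monotoneOn _)
    |>.intervalIntegrable.continuousOn_mul (by fun_prop)

namespace StieltjesFunction

theorem measure_real_Ioc_of_le (F : StieltjesFunction ℝ) {a b : ℝ} (hab : a ≤ b) :
    F.measure.real (Ioc a b) = F b - F a := by
  rw [measureReal_def, F.measure_Ioc, ENNReal.toReal_ofReal (sub_nonneg.2 (F.mono hab))]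

theorem integrableOn_Iic_comp_min (F : StieltjesFunction ℝ) {g : ℝ → ℝ} {a b : ℝ}
    (hab : a ≤ b) (hg : IntegrableOn g (Iic a) F.measure) :
    IntegrableOn (fun u => g (min u a)) (Iic b) F.measure := by
  rw [← Iic_union_Ioc_eq_Iic hab]
  refine IntegrableOn.union (hg.congr_fun (fun u hu => ?_) measurableSet_Iic)
    ((integrableOn_const (C := g a) measure_Ioc_lt_top.ne).congr_fun (fun u hu => ?_)
      measurableSet_Ioc)
  · simp only [min_eq_left (mem_Iic.1 hu)]
  · simp only [min_eq_right (mem_Ioc.1 hu).1.le]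

theorem setIntegral_Iic_comp_min (F : StieltjesFunction ℝ) {g : ℝ → ℝ} {a b : ℝ}
    (hab : a ≤ b) (hg : IntegrableOn g (Iic a) F.measure) :
    ∫ u in Iic b, g (min u a) ∂F.measure
      = (∫ u in Iic a, g u ∂F.measure) + g a * (F b - F a) := by
  have hint := F.integrableOn_Iic_comp_min hab hg
  have hleft : EqOn (fun u => g (min u a)) g (Iic a) := fun u hu => by
    simp only [min_eq_left (mem_Iic.1 hu)]
  have hright : EqOn (fun u => g (min u a)) (fun _ => g a) (Ioc a b) := fun u hu => by
    simp only [min_eq_right (mem_Ioc.1 hu).1.le]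
  rw [← Iic_union_Ioc_eq_Iic hab] at hint ⊢
  rw [setIntegral_union (Iic_disjoint_Ioc le_rfl) measurableSet_Ioc
      (hint.mono_set subset_union_left) (hint.mono_set subset_union_right),
    setIntegral_congr_fun measurableSet_Iic hleft, setIntegral_congr_fun measurableSet_Ioc hright,
    setIntegral_const, F.measure_real_Ioc_of_le hab, smul_eq_mul, mul_comm]

theorem mul_integral_exp_neg_mul_setIntegral_Iic (F : StieltjesFunction ℝ) {μ t : ℝ}
    (ht : 0 ≤ t) (hF : IntegrableOn (fun u => Real.exp (μ * u)) (Iic t) F.measure) :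
    μ * ∫ s in (0:ℝ)..t, Real.exp (-μ * s) * ∫ u in Iic s, Real.exp (μ * u) ∂F.measure
      = (∫ u in Iic 0, Real.exp (μ * u) ∂F.measure) + (F t - F 0)
        - Real.exp (-μ * t) * ∫ u in Iic t, Real.exp (μ * u) ∂F.measure := by
  have hF0 := hF.mono_set (Iic_subset_Iic.2 ht)
  have hkernel : ∀ u ∈ Iic t, Real.exp (μ * u) * ∫ s in Ioc (max 0 u) t, μ * Real.exp (-μ * s)
      = Real.exp (μ * min u 0) - Real.exp (-μ * t) * Real.exp (μ * u) := by
    intro u hu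
    rw [← intervalIntegral.integral_of_le (max_le ht hu), integral_mul_exp_neg_mul, mul_sub,
      ← Real.exp_add, mul_comm (Real.exp (-μ * t))]
    congr 2
    rcases le_total u 0 with h | h <;> simp [h]
  calc μ * ∫ s in (0:ℝ)..t, Real.exp (-μ * s) * ∫ u in Iic s, Real.exp (μ * u) ∂F.measure
      = ∫ s in Ioc 0 t, μ * Real.exp (-μ * s) * ∫ u in Iic s, Real.exp (μ * u) ∂F.measure := by
        simp_rw [intervalIntegral.integral_of_le ht, ← integral_const_mul, mul_assoc]
    _ = ∫ u in Iic t, Real.exp (μ * u) * (∫ s in Ioc (max 0 u) t, μ * Real.exp (-μ * s))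
          ∂F.measure :=
        setIntegral_Ioc_mul_setIntegral_Iic_swap (Continuous.integrableOn_Ioc (by fun_prop)) hF
    _ = ∫ u in Iic t, (Real.exp (μ * min u 0) - Real.exp (-μ * t) * Real.exp (μ * u))
          ∂F.measure := setIntegral_congr_fun measurableSet_Iic hkernel
    _ = _ := by
        rw [integral_sub (F.integrableOn_Iic_comp_min ht hF0) (hF.const_mul _),
          integral_const_mul, F.setIntegral_Iic_comp_min (g := fun u => Real.exp (μ * u)) ht hF0,
          mul_zero, Real.exp_zero, one_mul]

end StieltjesFunction

theorem ornstein_uhlenbeck_pathwise_general (μ : ℝ)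
    (F G : StieltjesFunction ℝ) (L : ℝ → ℝ)
    (hL : ∀ t, L t = F t - G t) (hL0 : L 0 = 0)
    (hFint : ∀ t : ℝ, IntegrableOn (fun s => Real.exp (μ * s)) (Iic t) F.measure)
    (hGint : ∀ t : ℝ, IntegrableOn (fun s => Real.exp (μ * s)) (Iic t) G.measure)
    (Z : ℝ → ℝ)
    (hZ : ∀ t : ℝ, Z t = Real.exp (-μ * t) *
      ((∫ s in Iic t, Real.exp (μ * s) ∂F.measure)
        - ∫ s in Iic t, Real.exp (μ * s) ∂G.measure)) :
    ∀ t : ℝ, 0 ≤ t → Z t = Z 0 - μ * (∫ s in (0:ℝ)..t, Z s) + L t := by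
  intro t ht
  have hsplit : ∫ s in (0:ℝ)..t, Z s
      = (∫ s in (0:ℝ)..t, Real.exp (-μ * s) * ∫ u in Iic s, Real.exp (μ * u) ∂F.measure)
        - ∫ s in (0:ℝ)..t, Real.exp (-μ * s) * ∫ u in Iic s, Real.exp (μ * u) ∂G.measure := by
    rw [← intervalIntegral.integral_sub (intervalIntegrable_exp_neg_mul_setIntegral_Iic hFint 0 t)
      (intervalIntegrable_exp_neg_mul_setIntegral_Iic hGint 0 t)]
    simp_rw [hZ, mul_sub]
  have hF := F.mul_integral_exp_neg_mul_setIntegral_Iic ht (hFint t)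
  have hG := G.mul_integral_exp_neg_mul_setIntegral_Iic ht (hGint t)
  rw [hL] at hL0 ⊢
  rw [hsplit, hZ t, hZ 0, mul_zero, Real.exp_zero, one_mul]
  linear_combination hF - hG - hL0

/-- pathwise version of Lemma 4.2(i). Let L = F − G be of bounded
variation on compacts (a difference of two Stieltjes functions), L(0) = 0, μ > 0,
and let Z_t = e^{−μt} ∫_{−∞}^t e^{μs} dL(s) (a well-defined Lebesgue–Stieltjes
integral). Then Z_t = Z_0 − μ ∫_0^t Z_s ds + L(t) for all t ≥ 0. -/
theorem ornstein_uhlenbeck_pathwise (μ : ℝ) (hμ : 0 < μ)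
    (F G : StieltjesFunction ℝ) (L : ℝ → ℝ)
    (hL : ∀ t, L t = F t - G t) (hL0 : L 0 = 0)
    (hFint : ∀ t : ℝ, IntegrableOn (fun s => Real.exp (μ * s)) (Iic t) F.measure)
    (hGint : ∀ t : ℝ, IntegrableOn (fun s => Real.exp (μ * s)) (Iic t) G.measure)
    (Z : ℝ → ℝ)
    (hZ : ∀ t : ℝ, Z t = Real.exp (-μ * t) *
      ((∫ s in Iic t, Real.exp (μ * s) ∂F.measure)
        - ∫ s in Iic t, Real.exp (μ * s) ∂G.measure)) :
    ∀ t : ℝ, 0 ≤ t → Z t = Z 0 - μ * (∫ s in (0:ℝ)..t, Z s) + L t :=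
  ornstein_uhlenbeck_pathwise_general μ F G L hL hL0 hFint hGint Z hZ
end
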